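/- For every constant κ ∈ (0, 1/2) there exist c > 0 and n₀ such that the following holds for every multiple of 4, n ≥ n₀, every M ⊆ [n] with |M| = n/2, and every P ⊆ Ψ_M with |P| = |Ψ_M|/2: every completion F of the D⁻ instance determined by (M, P) satisfies dist(F, Mono) ≥ c/√n. -/

import Mathlib

open Finset

attribute [local instance] Classical.propDecidable

variable {n : ℕ}

/-- The edge of the hypercube along dimension `i` at `x` (the pair
`{x^{(i→0)}, x^{(i→1)}}`) is decreasing for `f`. -/
def decEdge (f : (Fin n → Bool) → Bool) (x : Fin n → Bool) (i : Fin n) : Prop :=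
  f (Function.update x i false) = true ∧ f (Function.update x i true) = false

/-- `x` with its `i`-th coordinate flipped. -/
def flipC (x : Fin n → Bool) (i : Fin n) : Fin n → Bool := Function.update x i (!(x i))

/-- `g` is monotone. -/
def monoB (g : (Fin n → Bool) → Bool) : Prop :=
  ∀ x y : Fin n → Bool, (∀ i, x i ≤ y i) → g x ≤ g y

/-- Distance of `f` to the set of monotone functions. -/
noncomputable def distMono (f : (Fin n → Bool) → Bool) : ℝ :=
  sInf {d : ℝ | ∃ g : (Fin n → Bool) → Bool, monoB g ∧
    d = ((univ.filter fun x => f x ≠ g x).card : ℝ) / 2 ^ n}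

/-- `I_f⁻(x)`: the number of decreasing edges of `f` incident on `x`. -/
noncomputable def Iminus (f : (Fin n → Bool) → Bool) (x : Fin n → Bool) : ℕ :=
  (univ.filter fun i => decEdge f x i).card

/-- The number of decreasing edges of `f` (each edge represented by its lower
endpoint together with its dimension). -/
noncomputable def numDecEdges (f : (Fin n → Bool) → Bool) : ℕ :=
  (univ.filter fun q : (Fin n → Bool) × Fin n => q.1 q.2 = false ∧ decEdge f q.1 q.2).card

/-- The event Capture(x, S, f). -/
def Capture (f : (Fin n → Bool) → Bool) (S : Finset (Fin n)) (x : Fin n → Bool) : Prop :=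
  ∃ i ∈ S, decEdge f x i ∧ ∀ j ∈ S \ {i}, ¬ decEdge f (flipC x i) j

/-- Hamming weight of `x` restricted to the coordinates in `M`. -/
noncomputable def wt (M : Finset (Fin n)) (x : Fin n → Bool) : ℕ :=
  (M.filter fun i => x i = true).card

/-- `g` is unate. -/
def unate (g : (Fin n → Bool) → Bool) : Prop :=
  ∃ σ : Fin n → Bool, monoB (fun x => g (fun i => xor (x i) (σ i)))

/-- Distance of `f` to the set of unate functions. -/
noncomputable def distUnate (f : (Fin n → Bool) → Bool) : ℝ :=
  sInf {d : ℝ | ∃ g : (Fin n → Bool) → Bool, unate g ∧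
    d = ((univ.filter fun x => f x ≠ g x).card : ℝ) / 2 ^ n}

/-- `g` is a `k`-junta. -/
def isJunta (k : ℕ) (g : (Fin n → Bool) → Bool) : Prop :=
  ∃ J : Finset (Fin n), J.card ≤ k ∧
    ∀ x y : Fin n → Bool, (∀ i ∈ J, x i = y i) → g x = g y

/-- Distance of `f` to the set of `k`-juntas. -/
noncomputable def distJunta (k : ℕ) (f : (Fin n → Bool) → Bool) : ℝ :=
  sInf {d : ℝ | ∃ g : (Fin n → Bool) → Bool, isJunta k g ∧
    d = ((univ.filter fun x => f x ≠ g x).card : ℝ) / 2 ^ n}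

/-- `I⁻_{f,red}(x)` for the coloring `col` (an edge is identified by its lower
endpoint along its dimension; `col e i = true` means the edge along dimension `i`
at `e` is red). -/
noncomputable def IredCol (f : (Fin n → Bool) → Bool)
    (col : (Fin n → Bool) → Fin n → Bool) (x : Fin n → Bool) : ℕ :=
  if f x = true then
    (univ.filter fun i => decEdge f x i ∧ col (Function.update x i false) i = true).card
  else 0

/-- `I⁻_{f,blue}(x)` for the coloring `col`. -/
noncomputable def IblueCol (f : (Fin n → Bool) → Bool)
    (col : (Fin n → Bool) → Fin n → Bool) (x : Fin n → Bool) : ℕ :=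
  if f x = false then
    (univ.filter fun i => decEdge f x i ∧ col (Function.update x i false) i = false).card
  else 0

/-- `Ψ_M`: the middle layer of the subcube `{0,1}^M`. -/
noncomputable def PsiSet (M : Finset (Fin n)) : Finset (↥M → Bool) :=
  univ.filter fun z => (univ.filter fun i : ↥M => z i = true).card = n / 4

/-- `x` is an erased point (for parameter `κ` and control set `M`). -/
def ErasedPt (κ : ℝ) (M : Finset (Fin n)) (x : Fin n → Bool) : Prop :=
  wt M x = n / 4 ∧ |(wt Mᶜ x : ℝ) - (n : ℝ) / 4| ≤ (n : ℝ) ^ κ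

/-- `Maj(x_{M̄})`: majority on the coordinates outside `M`. -/
noncomputable def MajBar (M : Finset (Fin n)) (x : Fin n → Bool) : Bool :=
  decide (n / 4 < wt Mᶜ x)

/-- `F` is a completion of the `D⁻` instance determined by `(M, P)`. -/
def DminusCompletion (κ : ℝ) (M : Finset (Fin n)) (P : Finset (↥M → Bool))
    (F : (Fin n → Bool) → Bool) : Prop :=
  (∀ x, wt M x < n / 4 → F x = false) ∧
  (∀ x, n / 4 < wt M x → F x = true) ∧
  (∀ x, wt M x = n / 4 → ¬ ErasedPt κ M x →
    F x = if (fun i : ↥M => x i.1) ∈ P then MajBar M x else !(MajBar M x))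

/-- The function `F` of Statement 12: `F(x) = 1` iff `|x_M| > n/4`, or
`|x_M| = n/4` and `x_M ∉ P`. -/
noncomputable def DplusF (M : Finset (Fin n)) (P : Finset (↥M → Bool))
    (x : Fin n → Bool) : Bool :=
  if n / 4 < wt M x then true
  else if wt M x = n / 4 ∧ (fun i : ↥M => x i.1) ∉ P then true
  else false

/-!
On a subcube `x_M = z` with `z ∈ Ψ_M \ P`, a completion `F` is the anti-majority of `x_{M̄}`
outside the erased band `|x_{M̄}| = n/4 ± n^κ`. Hall's theorem, applied to the regular inclusion
graph between layer `k` and the mirror layer `n/2 - k` of `{0,1}^{M̄}`, matches every layer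
below the band injectively into its mirror above the band. This gives disjoint comparable pairs
on which `F` decreases, and a monotone function disagrees with `F` on one point of each pair.
Since `n^κ = o(√n)`, the layers below the band carry a constant fraction of `2^{n/2}`, and half of
the `Θ(2^{n/2}/√n)` points of `Ψ_M` lie outside `P`; this gives `Ω(2^n/√n)` disagreements.
-/

open Filter

namespace Nat

theorem succ_sq_mul_centralBinom_succ_sq (a : ℕ) :
    (a + 1) ^ 2 * centralBinom (a + 1) ^ 2 = (2 * (2 * a + 1)) ^ 2 * centralBinom a ^ 2 := by
  rw [← mul_pow, ← mul_pow, succ_mul_centralBinom_succ]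

theorem centralBinom_sq_mul_le (a : ℕ) : centralBinom a ^ 2 * (3 * a + 1) ≤ 16 ^ a := by
  induction a with
  | zero => simp
  | succ a ih =>
    refine Nat.le_of_mul_le_mul_left ?_ (show 0 < (a + 1) ^ 2 by positivity)
    calc (a + 1) ^ 2 * (centralBinom (a + 1) ^ 2 * (3 * (a + 1) + 1))
        = (2 * (2 * a + 1)) ^ 2 * (3 * a + 4) * centralBinom a ^ 2 := by
          rw [← mul_assoc, succ_sq_mul_centralBinom_succ_sq]; ring
      _ ≤ 16 * (a + 1) ^ 2 * (3 * a + 1) * centralBinom a ^ 2 :=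
          Nat.mul_le_mul_right _ (by nlinarith)
      _ = 16 * (a + 1) ^ 2 * (centralBinom a ^ 2 * (3 * a + 1)) := by ring
      _ ≤ 16 * (a + 1) ^ 2 * 16 ^ a := by gcongr
      _ = (a + 1) ^ 2 * 16 ^ (a + 1) := by ring

theorem sixteen_pow_le_centralBinom_sq_mul {a : ℕ} (ha : 1 ≤ a) :
    16 ^ a ≤ centralBinom a ^ 2 * (4 * a) := by
  induction a, ha using Nat.le_induction with
  | base => simp [centralBinom]
  | succ a _ ih =>
    refine Nat.le_of_mul_le_mul_left ?_ (show 0 < (a + 1) ^ 2 by positivity)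
    calc (a + 1) ^ 2 * 16 ^ (a + 1) = 16 * (a + 1) ^ 2 * 16 ^ a := by ring
      _ ≤ 16 * (a + 1) ^ 2 * (centralBinom a ^ 2 * (4 * a)) := by gcongr
      _ = 16 * (a + 1) ^ 2 * (4 * a) * centralBinom a ^ 2 := by ring
      _ ≤ (2 * (2 * a + 1)) ^ 2 * (4 * (a + 1)) * centralBinom a ^ 2 :=
          Nat.mul_le_mul_right _ (by nlinarith)
      _ = (a + 1) ^ 2 * (centralBinom (a + 1) ^ 2 * (4 * (a + 1))) := by
          rw [mul_right_comm, ← succ_sq_mul_centralBinom_succ_sq]; ring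

theorem four_pow_le_two_mul_sqrt_mul_centralBinom {a : ℕ} (ha : 1 ≤ a) :
    (4 : ℝ) ^ a ≤ 2 * √a * centralBinom a := by
  refine le_of_pow_le_pow_left₀ two_ne_zero (by positivity) ?_
  calc ((4 : ℝ) ^ a) ^ 2 = 16 ^ a := by rw [← pow_mul, mul_comm, pow_mul]; norm_num
    _ ≤ centralBinom a ^ 2 * (4 * a) := by exact_mod_cast sixteen_pow_le_centralBinom_sq_mul ha
    _ = (2 * √a * centralBinom a) ^ 2 := by
      rw [mul_pow, mul_pow, Real.sq_sqrt (Nat.cast_nonneg a)]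
      ring

theorem four_pow_le_four_mul_sum_range_choose {a t : ℕ} (ht : 1 ≤ t)
    (hta : 16 * t ^ 2 ≤ 3 * a + 1) :
    4 ^ a ≤ 4 * ∑ k ∈ range (a - t + 1), (2 * a).choose k := by
  have hta' : t ≤ a := by nlinarith
  set f : ℕ → ℕ := (2 * a).choose
  have htotal : ∑ k ∈ range (a - t + 1), f k + ∑ k ∈ Ico (a - t + 1) (a + t), f k
      + ∑ k ∈ Ico (a + t) (2 * a + 1), f k = 4 ^ a := by
    rw [range_eq_Ico, sum_Ico_consecutive _ (by omega) (by omega),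
      sum_Ico_consecutive _ (by omega) (by omega), ← range_eq_Ico, sum_range_choose, pow_mul]
    norm_num
  have hhigh : ∑ k ∈ Ico (a + t) (2 * a + 1), f k = ∑ k ∈ range (a - t + 1), f k := by
    rw [← sum_congr rfl fun k hk => choose_symm (n := 2 * a) (k := k) (by simp at hk; omega),
      sum_Ico_reflect f _ le_rfl, range_eq_Ico]
    congr 2 <;> omega
  have hmid : ∑ k ∈ Ico (a - t + 1) (a + t), f k ≤ 2 * t * centralBinom a :=
    calc _ ≤ #(Ico (a - t + 1) (a + t)) * centralBinom a := by
          simpa using sum_le_card_nsmul (Ico (a - t + 1) (a + t)) f _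
            fun k _ => choose_le_centralBinom k a
      _ ≤ 2 * t * centralBinom a := by rw [Nat.card_Ico]; exact Nat.mul_le_mul_right _ (by omega)
  have hcentral : 4 * t * centralBinom a ≤ 4 ^ a := by
    refine (Nat.pow_le_pow_iff_left two_ne_zero).mp ?_
    calc (4 * t * centralBinom a) ^ 2 = 16 * t ^ 2 * centralBinom a ^ 2 := by ring
      _ ≤ (3 * a + 1) * centralBinom a ^ 2 := by gcongr
      _ ≤ 16 ^ a := by linarith [centralBinom_sq_mul_le a]
      _ = (4 ^ a) ^ 2 := by rw [← pow_mul, mul_comm, pow_mul]; norm_num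
  linarith

end Nat

theorem Finset.exists_injOn_powersetCard_subset {α : Type*} [DecidableEq α] (B : Finset α)
    {k l : ℕ} (hkl : k ≤ l) (hB : k + l ≤ #B) :
    ∃ f : Finset α → Finset α, Set.MapsTo f (powersetCard k B) (powersetCard l B) ∧
      Set.InjOn f (powersetCard k B) ∧ ∀ S ∈ powersetCard k B, S ⊆ f S := by
  set up : powersetCard k B → Finset (Finset α) := fun S => {T ∈ powersetCard l B | S.1 ⊆ T}
  have hup (S : powersetCard k B) : #(up S) = (#B - k).choose (l - k) := by
    obtain ⟨hSB, hS⟩ := mem_powersetCard.mp S.2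
    rw [← hS]
    exact card_filter_powersetCard_subset _ _ _ hSB (by omega)
  have hdeg : l.choose k ≤ (#B - k).choose (l - k) := by
    rw [← Nat.choose_symm hkl]
    exact Nat.choose_le_choose _ (by omega)
  have hpos : 0 < (#B - k).choose (l - k) := Nat.choose_pos (by omega)
  -- Hall's condition by double counting: every `S` has `C(#B - k, l - k)` upper neighbours and
  -- every `T` has at most `C(l, k) ≤ C(#B - k, l - k)` lower ones.
  have hall (A : Finset (powersetCard k B)) : #A ≤ #(A.biUnion up) := by
    have := card_nsmul_le_card_nsmul (R := ℕ) (fun (S : powersetCard k B) T => S.1 ⊆ T)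
      (s := A) (t := A.biUnion up) (m := (#B - k).choose (l - k)) (n := l.choose k) ?_ ?_
    · simp only [smul_eq_mul] at this
      nlinarith
    · intro S hS
      rw [← hup S]
      refine card_le_card fun T hT => (mem_bipartiteAbove _).mpr ⟨mem_biUnion.mpr ⟨S, hS, hT⟩, ?_⟩
      exact (mem_filter.mp hT).2
    · intro T hT
      obtain ⟨S, -, hST⟩ := mem_biUnion.mp hT
      have hTl : #T = l := (mem_powersetCard.mp (mem_filter.mp hST).1).2
      calc #(A.bipartiteBelow _ T) ≤ #(powersetCard k T) := by
            refine card_le_card_of_injOn Subtype.val (fun S hS => ?_) Subtype.val_injective.injOn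
            exact mem_powersetCard.mpr
              ⟨((mem_bipartiteBelow _).mp hS).2, (mem_powersetCard.mp S.2).2⟩
        _ = l.choose k := by rw [card_powersetCard, hTl]
  obtain ⟨f, hf, hfmem⟩ := (all_card_le_biUnion_card_iff_exists_injective up).mp hall
  refine ⟨fun S => if h : S ∈ powersetCard k B then f ⟨S, h⟩ else S, fun S hS => ?_,
    fun S hS S' hS' h => ?_, fun S hS => ?_⟩
  · rw [mem_coe] at hS ⊢
    simp only [dif_pos hS]
    exact (mem_filter.mp (hfmem ⟨S, hS⟩)).1
  · rw [mem_coe] at hS hS'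
    simp only [dif_pos hS, dif_pos hS'] at h
    exact congrArg Subtype.val (hf h)
  · simp only [dif_pos hS]
    exact (mem_filter.mp (hfmem ⟨S, hS⟩)).2

theorem Finset.exists_injOn_subset_card_eq_card_sub {α : Type*} [DecidableEq α] (B : Finset α) :
    ∃ φ : Finset α → Finset α, Set.InjOn φ {T | T ⊆ B ∧ 2 * #T ≤ #B} ∧
      ∀ T ⊆ B, 2 * #T ≤ #B → T ⊆ φ T ∧ φ T ⊆ B ∧ #(φ T) = #B - #T := by
  have hlayer (k : ℕ) : ∃ m : Finset α → Finset α, 2 * k ≤ #B →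
      Set.MapsTo m (powersetCard k B) (powersetCard (#B - k) B) ∧
        Set.InjOn m (powersetCard k B) ∧ ∀ S ∈ powersetCard k B, S ⊆ m S := by
    by_cases hk : 2 * k ≤ #B
    · obtain ⟨m, hm⟩ := B.exists_injOn_powersetCard_subset (k := k) (l := #B - k) (by omega)
        (by omega)
      exact ⟨m, fun _ => hm⟩
    · exact ⟨id, fun h => absurd h hk⟩
  choose m hm using hlayer
  have hmem {T : Finset α} (hT : T ⊆ B) : T ∈ (powersetCard #T B : Set (Finset α)) :=
    mem_powersetCard.mpr ⟨hT, rfl⟩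
  refine ⟨fun T => m #T T, fun T hT T' hT' h => ?_, fun T hT hTB => ?_⟩
  · obtain ⟨hTB, hT2⟩ := hT
    obtain ⟨hT'B, hT'2⟩ := hT'
    dsimp only at h
    have hcard := (mem_powersetCard.mp ((hm _ hT2).1 (hmem hTB))).2
    rw [h, (mem_powersetCard.mp ((hm _ hT'2).1 (hmem hT'B))).2] at hcard
    have hk : #T = #T' := by omega
    rw [hk] at h hT2
    exact (hm _ hT2).2.1 (mem_powersetCard.mpr ⟨hTB, hk⟩) (hmem hT'B) h
  · obtain ⟨hsub, hcard⟩ := mem_powersetCard.mp ((hm _ hTB).1 (hmem hT))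
    exact ⟨(hm _ hTB).2.2 T (hmem hT), hsub, hcard⟩

theorem Finset.card_filter_powerset_card_le {α : Type*} (B : Finset α) (m : ℕ) :
    #{T ∈ B.powerset | #T ≤ m} = ∑ k ∈ range (m + 1), (#B).choose k := by
  rw [card_eq_sum_card_fiberwise (f := card) (t := range (m + 1))
    fun T hT => mem_range.mpr (Nat.lt_succ_of_le (mem_filter.mp hT).2)]
  refine sum_congr rfl fun k hk => ?_
  rw [← card_powersetCard, powersetCard_eq_filter, filter_filter]
  congr 1
  exact filter_congr fun T _ =>
    ⟨fun h => h.2, fun h => ⟨h ▸ Nat.le_of_lt_succ (mem_range.mp hk), h⟩⟩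

theorem card_le_card_filter_ne_of_monotone {ι α : Type*} [Preorder α] [Fintype α]
    {F g : α → Bool} (hg : Monotone g) {I : Finset ι} {lo hi : ι → α}
    (hlo : Set.InjOn lo I) (hhi : Set.InjOn hi I) (hlohi : ∀ i ∈ I, ∀ j ∈ I, lo i ≠ hi j)
    (hle : ∀ i ∈ I, lo i ≤ hi i) (hFlo : ∀ i ∈ I, F (lo i) = true)
    (hFhi : ∀ i ∈ I, F (hi i) = false) :
    #I ≤ #{x | F x ≠ g x} := by
  -- `g` cannot agree with `F` at both ends of a decreasing pair
  refine card_le_card_of_injOn (fun i => if F (lo i) ≠ g (lo i) then lo i else hi i)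
    (fun i hiI => ?_) (fun i hiI j hjI h => ?_) <;> rw [mem_coe] at hiI
  · simp only [mem_coe, mem_filter, mem_univ, true_and]
    split_ifs with h
    · exact h
    · have hglo : g (lo i) = true := not_ne_iff.mp h ▸ hFlo i hiI
      have hghi : g (hi i) = true := top_unique (hglo ▸ hg (hle i hiI) :)
      rw [hFhi i hiI, hghi]
      decide
  · rw [mem_coe] at hjI
    dsimp only at h
    split_ifs at h
    · exact hlo hiI hjI h
    · exact absurd h (hlohi i hiI j hjI)
    · exact absurd h.symm (hlohi j hjI i hiI)
    · exact hhi hiI hjI h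

def glue (M : Finset (Fin n)) (z : M → Bool) (T : Finset (Fin n)) : Fin n → Bool :=
  fun i => if h : i ∈ M then z ⟨i, h⟩ else decide (i ∈ T)

section Glue

variable (M : Finset (Fin n)) (z : M → Bool)

theorem glue_restrict (T : Finset (Fin n)) : (fun i : M => glue M z T i) = z := by
  funext i
  simp [glue]

theorem wt_eq_card_filter_univ (x : Fin n → Bool) : wt M x = #{i : M | x i = true} := by
  rw [wt, ← card_map (Function.Embedding.subtype (· ∈ M))]
  congr 1
  ext i
  simp [and_comm]

theorem wt_glue (T : Finset (Fin n)) : wt M (glue M z T) = #{i | z i = true} := by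
  simp [wt_eq_card_filter_univ, glue]

variable {M} in
theorem wt_compl_glue {T : Finset (Fin n)} (hT : T ⊆ Mᶜ) : wt Mᶜ (glue M z T) = #T := by
  rw [wt]
  congr 1
  ext i
  by_cases hi : i ∈ M
  · have hiT : i ∉ T := fun h => mem_compl.mp (hT h) hi
    simp [hi, hiT]
  · rw [mem_filter]
    simp [glue, hi]

theorem glue_mono {T T' : Finset (Fin n)} (h : T ⊆ T') : glue M z T ≤ glue M z T' := by
  intro i
  by_cases hi : i ∈ M
  · simp [glue, hi]
  · simp only [glue, dif_neg hi]
    by_cases hT : i ∈ T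
    · simp [hT, h hT]
    · simp [hT]

variable {M z} in
theorem glue_inj {z' : M → Bool} {T T' : Finset (Fin n)} (hT : T ⊆ Mᶜ) (hT' : T' ⊆ Mᶜ)
    (h : glue M z T = glue M z' T') : z = z' ∧ T = T' := by
  refine ⟨by rw [← glue_restrict M z T, h, glue_restrict], ?_⟩
  ext i
  by_cases hi : i ∈ M
  · exact iff_of_false (fun h => mem_compl.mp (hT h) hi) (fun h => mem_compl.mp (hT' h) hi)
  · simpa [glue, hi] using congrFun h i

end Glue

theorem card_PsiSet (M : Finset (Fin n)) : #(PsiSet M) = (#M).choose (n / 4) := by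
  rw [← Fintype.card_coe M, ← card_univ, ← card_powersetCard]
  refine card_nbij' (fun z => univ.filter fun i => z i = true) (fun T i => decide (i ∈ T))
    ?_ ?_ ?_ ?_
  · intro z hz
    simpa only [PsiSet, mem_coe, mem_filter, mem_univ, true_and, mem_powersetCard, subset_univ]
      using hz
  · intro T hT
    simpa only [PsiSet, mem_coe, mem_filter, mem_univ, true_and, mem_powersetCard, subset_univ,
      decide_eq_true_eq, filter_mem_eq_inter, univ_inter] using hT
  · intro z _
    funext i
    simp
  · intro T _
    ext i
    simp

theorem DminusCompletion.apply_glue {κ : ℝ} {M : Finset (Fin n)} {P : Finset (M → Bool)}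
    {F : (Fin n → Bool) → Bool} (hF : DminusCompletion κ M P F) {a t : ℕ} (hn : n = 4 * a)
    (ht : (n : ℝ) ^ κ < t) {z : M → Bool} (hz : z ∈ PsiSet M \ P) {T : Finset (Fin n)}
    (hT : T ⊆ Mᶜ) (hfar : t + #T ≤ a ∨ a + t ≤ #T) : F (glue M z T) = decide (#T ≤ a) := by
  obtain ⟨hzΨ, hzP⟩ := mem_sdiff.mp hz
  have hwt : wt M (glue M z T) = n / 4 := by
    rw [wt_glue]
    exact (mem_filter.mp hzΨ).2
  have hne : ¬ ErasedPt κ M (glue M z T) := by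
    rintro ⟨-, hband⟩
    have hn4 : (n : ℝ) / 4 = a := by
      rw [hn]
      push_cast
      ring
    rw [wt_compl_glue z hT, abs_le, hn4] at hband
    rcases hfar with hfar | hfar
    · have : (t : ℝ) + #T ≤ a := by exact_mod_cast hfar
      linarith [hband.1]
    · have : (a : ℝ) + t ≤ #T := by exact_mod_cast hfar
      linarith [hband.2]
  rw [hF.2.2 _ hwt hne, glue_restrict, if_neg hzP, MajBar, wt_compl_glue z hT,
    show n / 4 = a by omega]
  simp only [← decide_not, not_lt]

theorem DminusCompletion.card_sdiff_mul_sum_choose_le {κ : ℝ} {M : Finset (Fin n)}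
    {P : Finset (M → Bool)} {F : (Fin n → Bool) → Bool} (hF : DminusCompletion κ M P F)
    {a t : ℕ} (hn : n = 4 * a) (hM : #M = 2 * a) (ht : (n : ℝ) ^ κ < t) (hta : t ≤ a)
    {g : (Fin n → Bool) → Bool} (hg : monoB g) :
    #(PsiSet M \ P) * ∑ k ∈ range (a - t + 1), (2 * a).choose k ≤ #{x | F x ≠ g x} := by
  have hMc : #Mᶜ = 2 * a := by
    rw [card_compl, Fintype.card_fin, hM]
    omega
  have ht0 : 0 < t := by exact_mod_cast (Real.rpow_nonneg (Nat.cast_nonneg n) κ).trans_lt ht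
  obtain ⟨φ, hφinj, hφ⟩ := Mᶜ.exists_injOn_subset_card_eq_card_sub
  set I := (PsiSet M \ P) ×ˢ {T ∈ Mᶜ.powerset | #T ≤ a - t}
  have hI {p} (hp : p ∈ I) : p.1 ∈ PsiSet M \ P ∧ p.2 ⊆ Mᶜ ∧ t + #p.2 ≤ a := by
    simp only [I, mem_product, mem_filter, mem_powerset] at hp
    exact ⟨hp.1, hp.2.1, by omega⟩
  have hφI {p} (hp : p ∈ I) : p.2 ⊆ φ p.2 ∧ φ p.2 ⊆ Mᶜ ∧ #(φ p.2) = 2 * a - #p.2 := by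
    rw [← hMc]
    exact hφ p.2 (hI hp).2.1 (by rw [hMc]; linarith [(hI hp).2.2])
  have hcard : #I = #(PsiSet M \ P) * ∑ k ∈ range (a - t + 1), (2 * a).choose k := by
    rw [card_product, card_filter_powerset_card_le, hMc]
  rw [← hcard]
  refine card_le_card_filter_ne_of_monotone (fun x y h => hg x y h)
    (lo := fun p => glue M p.1 p.2) (hi := fun p => glue M p.1 (φ p.2))
    (fun p hp q hq h => ?_) (fun p hp q hq h => ?_) (fun p hp q hq h => ?_)
    (fun p hp => glue_mono M p.1 (hφI hp).1) (fun p hp => ?_) (fun p hp => ?_)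
  · obtain ⟨h1, h2⟩ := glue_inj (hI hp).2.1 (hI hq).2.1 h
    exact Prod.ext h1 h2
  · obtain ⟨h1, h2⟩ := glue_inj (hφI hp).2.1 (hφI hq).2.1 h
    refine Prod.ext h1 (hφinj ⟨(hI hp).2.1, ?_⟩ ⟨(hI hq).2.1, ?_⟩ h2) <;>
      linarith [(hI hp).2.2, (hI hq).2.2]
  · have hpq := congrArg card (glue_inj (hI hp).2.1 (hφI hq).2.1 h).2
    have hp' := (hI hp).2.2
    have hq' := (hI hq).2.2
    have hφq := (hφI hq).2.2
    omega
  · rw [hF.apply_glue hn ht (hI hp).1 (hI hp).2.1 (Or.inl (hI hp).2.2), decide_eq_true_eq]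
    linarith [(hI hp).2.2]
  · have hp' := (hI hp).2.2
    have hφp := (hφI hp).2.2
    rw [hF.apply_glue hn ht (hI hp).1 (hφI hp).2.1 (Or.inr (by omega)), decide_eq_false_iff_not]
    omega

theorem le_distMono {F : (Fin n → Bool) → Bool} {D : ℕ}
    (h : ∀ g, monoB g → D ≤ #{x | F x ≠ g x}) : (D : ℝ) / 2 ^ n ≤ distMono F := by
  refine le_csInf ⟨_, fun _ => false, fun _ _ _ => le_rfl, rfl⟩ ?_
  rintro d ⟨g, hg, rfl⟩
  gcongr
  exact_mod_cast h g hg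

theorem div_sqrt_four_mul_le_div_two_pow {a D : ℕ} (ha : 1 ≤ a)
    (hD : Nat.centralBinom a * 4 ^ a ≤ 8 * D) :
    1 / 8 / √((4 * a : ℕ) : ℝ) ≤ D / 2 ^ (4 * a) := by
  have hsqrt : √((4 * a : ℕ) : ℝ) = 2 * √a := by
    rw [Nat.cast_mul, Nat.cast_ofNat, Real.sqrt_mul (by norm_num),
      show (4 : ℝ) = 2 ^ 2 by norm_num, Real.sqrt_sq (by norm_num)]
  have hD' : (Nat.centralBinom a * 4 ^ a : ℝ) ≤ 8 * D := by exact_mod_cast hD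
  rw [div_div, div_le_div_iff₀ (by positivity) (by positivity), hsqrt]
  calc 1 * (2 : ℝ) ^ (4 * a) = 4 ^ a * 4 ^ a := by
        rw [one_mul, ← mul_pow, pow_mul]
        norm_num
    _ ≤ (2 * √a * Nat.centralBinom a) * 4 ^ a := by
        gcongr
        exact Nat.four_pow_le_two_mul_sqrt_mul_centralBinom ha
    _ = 2 * √a * (Nat.centralBinom a * 4 ^ a) := by ring
    _ ≤ 2 * √a * (8 * D) := by gcongr
    _ = D * (8 * (2 * √a)) := by ring

theorem eventually_sixtyfour_mul_rpow_add_one_sq_le {κ : ℝ} (hκ0 : 0 < κ) (hκ : κ < 1 / 2) :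
    ∀ᶠ x : ℝ in atTop, 64 * (x ^ κ + 1) ^ 2 ≤ 3 * x := by
  filter_upwards [eventually_ge_atTop 1,
    (tendsto_rpow_neg_atTop (by linarith : 0 < 1 - 2 * κ)).eventually
      (eventually_le_nhds (by norm_num : (0 : ℝ) < 3 / 256))] with x hx1 hx
  have h1 : 1 ≤ x ^ κ := Real.one_le_rpow hx1 hκ0.le
  have h2 : (x ^ κ) ^ 2 = x ^ (-(1 - 2 * κ)) * x := by
    rw [← Real.rpow_natCast, ← Real.rpow_mul (by linarith), ← Real.rpow_add_one (by positivity)]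
    ring_nf
  nlinarith [mul_le_mul_of_nonneg_right hx (by linarith : (0 : ℝ) ≤ x)]

theorem eventually_exists_rpow_lt_and_sixteen_mul_sq_le {κ : ℝ} (hκ0 : 0 < κ) (hκ : κ < 1 / 2) :
    ∀ᶠ a : ℕ in atTop, ∃ t : ℕ, ((4 * a : ℕ) : ℝ) ^ κ < t ∧ 16 * t ^ 2 ≤ 3 * a + 1 := by
  have h4 : Tendsto (fun a : ℕ => ((4 * a : ℕ) : ℝ)) atTop atTop :=
    tendsto_natCast_atTop_atTop.comp (tendsto_id.const_mul_atTop' (by norm_num))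
  filter_upwards [h4.eventually (eventually_sixtyfour_mul_rpow_add_one_sq_le hκ0 hκ)] with a ha
  refine ⟨⌊((4 * a : ℕ) : ℝ) ^ κ⌋₊ + 1, by push_cast; exact Nat.lt_floor_add_one _, ?_⟩
  have hfloor := Nat.floor_le (Real.rpow_nonneg (Nat.cast_nonneg (4 * a)) κ)
  have : (16 * (⌊((4 * a : ℕ) : ℝ) ^ κ⌋₊ + 1 : ℕ) ^ 2 : ℝ) ≤ 3 * a + 1 := by
    push_cast at ha hfloor ⊢
    nlinarith
  exact_mod_cast this

/-- every completion `F` of a `D⁻` instance is `Ω(1/√n)`-far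
from monotone. -/
theorem stmt13 : ∀ κ : ℝ, 0 < κ → κ < 1 / 2 →
    ∃ c : ℝ, 0 < c ∧ ∃ n₀ : ℕ, ∀ n : ℕ, n₀ ≤ n → 4 ∣ n →
    ∀ M : Finset (Fin n), M.card = n / 2 →
    ∀ P : Finset (↥M → Bool), P ⊆ PsiSet M → 2 * P.card = (PsiSet M).card →
    ∀ F : (Fin n → Bool) → Bool, DminusCompletion κ M P F →
    c / Real.sqrt n ≤ distMono F := by
  intro κ hκ0 hκ
  obtain ⟨a₀, ha₀⟩ := eventually_atTop.mp (eventually_exists_rpow_lt_and_sixteen_mul_sq_le hκ0 hκ)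
  refine ⟨1 / 8, by norm_num, 4 * a₀, ?_⟩
  rintro n hn ⟨a, rfl⟩ M hM P hPsub hPcard F hF
  obtain ⟨t, ht, hta⟩ := ha₀ a (by omega)
  have ht1 : 1 ≤ t := by exact_mod_cast (Real.rpow_nonneg (Nat.cast_nonneg _) κ).trans_lt ht
  have hΨ : #(PsiSet M) = Nat.centralBinom a := by
    rw [card_PsiSet, hM, Nat.centralBinom_eq_two_mul_choose]
    congr 1 <;> omega
  have hQ : 2 * #(PsiSet M \ P) = Nat.centralBinom a := by
    rw [card_sdiff_of_subset hPsub]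
    omega
  refine (div_sqrt_four_mul_le_div_two_pow (by nlinarith) ?_).trans
    (le_distMono fun g hg => hF.card_sdiff_mul_sum_choose_le rfl (by omega) ht (by nlinarith) hg)
  calc Nat.centralBinom a * 4 ^ a
      ≤ 2 * #(PsiSet M \ P) * (4 * ∑ k ∈ range (a - t + 1), (2 * a).choose k) := by
        rw [hQ]
        exact Nat.mul_le_mul_left _ (Nat.four_pow_le_four_mul_sum_range_choose ht1 hta)
    _ = 8 * (#(PsiSet M \ P) * ∑ k ∈ range (a - t + 1), (2 * a).choose k) := by ring
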